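/- arXiv:1003.2226 — 3 statements merged into one kernel-verified Lean document; each statement's English description precedes it below -/
import Mathlib

section
/- For every real z ≥ 0, the modified Bessel function of the first kind of order zero satisfies I₀(z) ≤ (√π/2) · e^z/√z. (For z = 0 the right-hand side is interpreted as +∞, so the substantive claim is for z > 0.) -/
/-!
Jordan's inequality `sin x ≥ 2x/π` on `[0, π/2]`, applied to `1 - cos θ = 2 sin² (θ/2)`, gives
`cos θ ≤ 1 - 2θ²/π²` on `[0, π]`. So `exp (z cos θ)` is dominated by `e^z` times a Gaussian in `θ`,
and extending the Gaussian integral to the half-line yields `I₀(z) ≤ e^z √(π/(2z)) / 2`,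
which is sharper than the claim by a factor `√2`.
-/

open Real MeasureTheory

/-- Modified Bessel function of the first kind of order zero,
via its integral representation `I₀(z) = (1/π) ∫₀^π exp(z cos θ) dθ`. -/
noncomputable def besselI0 (z : ℝ) : ℝ :=
  (1 / Real.pi) * ∫ θ in (0:ℝ)..Real.pi, Real.exp (z * Real.cos θ)

lemma intervalIntegral_exp_neg_mul_sq_le {a : ℝ} (ha : 0 < a) {b : ℝ} (hb : 0 ≤ b) :
    ∫ x in (0:ℝ)..b, exp (-a * x ^ 2) ≤ √(π / a) / 2 := by
  rw [intervalIntegral.integral_of_le hb, ← integral_gaussian_Ioi a]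
  exact setIntegral_mono_set (integrable_exp_neg_mul_sq ha).integrableOn
    (.of_forall fun _ => (exp_pos _).le) (.of_forall Set.Ioc_subset_Ioi_self)

lemma integral_exp_mul_cos_le {z : ℝ} (hz : 0 ≤ z) :
    ∫ θ in (0:ℝ)..π, exp (z * cos θ) ≤
      exp z * ∫ θ in (0:ℝ)..π, exp (-(2 * z / π ^ 2) * θ ^ 2) := by
  rw [← intervalIntegral.integral_const_mul]
  refine intervalIntegral.integral_mono_on pi_pos.le
    ((by fun_prop : Continuous _).intervalIntegrable _ _)
    ((by fun_prop : Continuous _).intervalIntegrable _ _) fun θ hθ => ?_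
  have hcos : cos θ ≤ 1 - 2 / π ^ 2 * θ ^ 2 :=
    cos_le_one_sub_mul_cos_sq (abs_le.2 ⟨by linarith [hθ.1, pi_pos], hθ.2⟩)
  rw [← exp_add, exp_le_exp]
  calc z * cos θ ≤ z * (1 - 2 / π ^ 2 * θ ^ 2) := mul_le_mul_of_nonneg_left hcos hz
    _ = z + -(2 * z / π ^ 2) * θ ^ 2 := by ring

lemma besselI0_le_exp_mul_sqrt_pi_div_two_mul {z : ℝ} (hz : 0 < z) :
    besselI0 z ≤ exp z * √(π / (2 * z)) / 2 := by
  have hsqrt : √(π / (2 * z / π ^ 2)) = π * √(π / (2 * z)) := by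
    rw [div_div_eq_mul_div, mul_comm, mul_div_assoc, sqrt_mul (by positivity), sqrt_sq pi_pos.le]
  calc besselI0 z ≤ 1 / π * (exp z * (√(π / (2 * z / π ^ 2)) / 2)) := by
        unfold besselI0
        gcongr
        exact (integral_exp_mul_cos_le hz.le).trans <| by
          gcongr; exact intervalIntegral_exp_neg_mul_sq_le (by positivity) pi_pos.le
    _ = exp z * √(π / (2 * z)) / 2 := by
        rw [hsqrt]; field_simp

/-- For every `z ≥ 0`, `I₀(z) ≤ (√π/2) ⬝ e^z / √z`, where for `z = 0` the right-hand
side is interpreted as `+∞` (division in `ℝ≥0∞`). -/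
theorem besselI0_le_sqrt_pi_div_two_mul_exp_div_sqrt (z : ℝ) (hz : 0 ≤ z) :
    ENNReal.ofReal (besselI0 z) ≤
      ENNReal.ofReal (Real.sqrt Real.pi / 2 * Real.exp z) / ENNReal.ofReal (Real.sqrt z) := by
  rcases hz.eq_or_lt with rfl | hz
  · rw [sqrt_zero, ENNReal.ofReal_zero, ENNReal.div_zero (ENNReal.ofReal_pos.2 (by positivity)).ne']
    exact le_top
  rw [← ENNReal.ofReal_div_of_pos (sqrt_pos.2 hz)]
  refine ENNReal.ofReal_le_ofReal ((besselI0_le_exp_mul_sqrt_pi_div_two_mul hz).trans ?_)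
  calc exp z * √(π / (2 * z)) / 2 ≤ exp z * √(π / z) / 2 := by
        gcongr; linarith
    _ = √π / 2 * exp z / √z := by
        rw [sqrt_div' _ hz.le]; ring
end

section
/- Fix reals P > 0 and N > 0. Let Φ be uniformly distributed on [0, 2π), and let Z₁, Z₂ be centered real Gaussian random variables of variance N/2, with Φ, Z₁, Z₂ mutually independent. Then the distribution of the complex random variable Y = √P·cos Φ + Z₁ + i(√P·sin Φ + Z₂) is absolutely continuous with respect to Lebesgue measure on ℂ with density p(y) = (1/(πN)) · exp(−(|y|² + P)/N) · I₀(2|y|√P/N). -/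
/-!
Write `Y = Z + √P e^{iΦ}` with `Z = Z₁ + i Z₂`. The noise `Z` is a circular Gaussian with density
`(πN)⁻¹ exp (-‖z‖² / N)` and is independent of `Φ`, so the law of `Y` is the convolution of this
density with the uniform law on the circle of radius `√P`: its density at `y` is the average of
`(πN)⁻¹ exp (-‖y - x‖² / N)` over that circle. Measuring angles from `arg y`,
`‖y - √P e^{i(θ + arg y)}‖² = ‖y‖² + P - 2 ‖y‖ √P cos θ`, and the average reduces to
`(2π)⁻¹ ∫₀^{2π} exp (R cos θ) dθ = I₀(R)`.
-/

open Real MeasureTheory ProbabilityTheory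
open scoped ENNReal NNReal

theorem integral_exp_mul_cos_eq_besselI0 (R : ℝ) :
    ∫ θ in (0:ℝ)..2 * π, exp (R * cos θ) = 2 * π * besselI0 R := by
  have hper : Function.Periodic (fun θ => exp (R * cos θ)) (2 * π) := fun θ => by
    simp [cos_add_two_pi]
  have hint : ∀ a b : ℝ, IntervalIntegrable (fun θ => exp (R * cos θ)) volume a b :=
    fun a b => by apply Continuous.intervalIntegrable; fun_prop
  have hsymm : ∫ θ in -π..0, exp (R * cos θ) = ∫ θ in (0:ℝ)..π, exp (R * cos θ) := by
    simpa using
      (intervalIntegral.integral_comp_neg (a := 0) (b := π) (fun θ => exp (R * cos θ))).symm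
  calc ∫ θ in (0:ℝ)..2 * π, exp (R * cos θ)
      = ∫ θ in -π..π, exp (R * cos θ) := by
        simpa [two_mul] using hper.intervalIntegral_add_eq 0 (-π)
    _ = (∫ θ in -π..0, exp (R * cos θ)) + ∫ θ in (0:ℝ)..π, exp (R * cos θ) :=
      (intervalIntegral.integral_add_adjacent_intervals (hint _ _) (hint _ _)).symm
    _ = 2 * π * besselI0 R := by
      rw [hsymm, besselI0]
      field_simp
      ring

open Complex in
theorem norm_sub_circleMap_add_arg_sq (y : ℂ) (r θ : ℝ) :
    ‖y - circleMap 0 r (θ + arg y)‖ ^ 2 = ‖y‖ ^ 2 + r ^ 2 - 2 * ‖y‖ * r * Real.cos θ := by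
  rw [Complex.sq_norm, normSq_apply, Complex.sq_norm, normSq_apply]
  simp only [circleMap_zero, sub_re, sub_im, mul_re, mul_im, ofReal_re, ofReal_im,
    exp_ofReal_mul_I_re, exp_ofReal_mul_I_im, Real.cos_add, Real.sin_add]
  rw [← norm_mul_cos_arg y, ← norm_mul_sin_arg y]
  linear_combination
    (r ^ 2 * (Real.sin θ ^ 2 + Real.cos θ ^ 2) - 2 * ‖y‖ * r * Real.cos θ)
      * Real.sin_sq_add_cos_sq (arg y) + r ^ 2 * Real.sin_sq_add_cos_sq θ

theorem ofReal_add_ofReal_mul_I_eq_add_circleMap (r θ a b : ℝ) :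
    ((r * Real.cos θ + a : ℝ) : ℂ) + ((r * Real.sin θ + b : ℝ) : ℂ) * Complex.I
      = (a + b * Complex.I) + circleMap 0 r θ := by
  simp only [circleMap_zero, Complex.exp_mul_I, ← Complex.ofReal_cos, ← Complex.ofReal_sin]
  push_cast
  ring

noncomputable def circularGaussianPDFReal (N : ℝ) (z : ℂ) : ℝ :=
  (π * N)⁻¹ * exp (-‖z‖ ^ 2 / N)

@[fun_prop]
theorem continuous_circularGaussianPDFReal (N : ℝ) : Continuous (circularGaussianPDFReal N) := by
  unfold circularGaussianPDFReal
  fun_prop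

theorem circularGaussianPDFReal_nonneg {N : ℝ} (hN : 0 ≤ N) (z : ℂ) :
    0 ≤ circularGaussianPDFReal N z := by
  unfold circularGaussianPDFReal
  positivity

theorem gaussianPDFReal_re_mul_gaussianPDFReal_im {N : ℝ} (hN : 0 ≤ N) (z : ℂ) :
    gaussianPDFReal 0 (N / 2).toNNReal z.re * gaussianPDFReal 0 (N / 2).toNNReal z.im
      = circularGaussianPDFReal N z := by
  rw [gaussianPDFReal, gaussianPDFReal, circularGaussianPDFReal,
    Real.coe_toNNReal _ (by positivity), show 2 * π * (N / 2) = π * N by ring,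
    show 2 * (N / 2) = N by ring, mul_mul_mul_comm, ← mul_inv,
    Real.mul_self_sqrt (by positivity), ← exp_add, Complex.sq_norm, Complex.normSq_apply]
  ring_nf

theorem map_measurableEquivRealProd_symm_gaussianReal_prod {N : ℝ} (hN : 0 < N) :
    ((gaussianReal 0 (N / 2).toNNReal).prod (gaussianReal 0 (N / 2).toNNReal)).map
        Complex.measurableEquivRealProd.symm
      = volume.withDensity (fun z => ENNReal.ofReal (circularGaussianPDFReal N z)) := by
  have hv : (N / 2).toNNReal ≠ 0 := by simpa using hN
  rw [gaussianReal_of_var_ne_zero _ hv, prod_withDensity (measurable_gaussianPDF _ _)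
    (measurable_gaussianPDF _ _), ← Measure.volume_eq_prod]
  ext s hs
  rw [Measure.map_apply (MeasurableEquiv.measurable _) hs,
    withDensity_apply _ (MeasurableEquiv.measurable _ hs), withDensity_apply _ hs,
    ← Complex.volume_preserving_equiv_real_prod.setLIntegral_comp_preimage_emb
      Complex.measurableEquivRealProd.measurableEmbedding]
  simp only [Set.preimage_preimage]
  refine setLIntegral_congr_fun hs fun z _ => ?_
  rw [gaussianPDF, gaussianPDF, ← ENNReal.ofReal_mul (gaussianPDFReal_nonneg _ _ _)]
  exact congrArg ENNReal.ofReal (gaussianPDFReal_re_mul_gaussianPDFReal_im hN.le z)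

theorem ProbabilityTheory.IndepFun.map_add_mul_I_eq_withDensity {Ω : Type*} [MeasurableSpace Ω]
    {μ : Measure Ω} [IsFiniteMeasure μ] {X Y : Ω → ℝ} {N : ℝ} (hXY : IndepFun X Y μ)
    (hN : 0 < N) (hX : AEMeasurable X μ) (hY : AEMeasurable Y μ)
    (hXlaw : μ.map X = gaussianReal 0 (N / 2).toNNReal)
    (hYlaw : μ.map Y = gaussianReal 0 (N / 2).toNNReal) :
    μ.map (fun ω => (X ω : ℂ) + Y ω * Complex.I)
      = volume.withDensity (fun z => ENNReal.ofReal (circularGaussianPDFReal N z)) := by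
  have hcomp : (fun ω => (X ω : ℂ) + Y ω * Complex.I)
      = Complex.measurableEquivRealProd.symm ∘ fun ω => (X ω, Y ω) := by
    ext ω
    simp [Complex.mk_eq_add_mul_I]
  rw [hcomp, ← (MeasurableEquiv.measurable _).aemeasurable.map_map_of_aemeasurable (hX.prodMk hY),
    (indepFun_iff_map_prod_eq_prod_map_map hX hY).1 hXY, hXlaw, hYlaw,
    map_measurableEquivRealProd_symm_gaussianReal_prod hN]

theorem MeasureTheory.Measure.withDensity_conv {G : Type*} [AddCommGroup G] [MeasurableSpace G]
    [MeasurableAdd₂ G] [MeasurableNeg G] {ν : Measure G} [SFinite ν] [ν.IsAddRightInvariant]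
    (μ : Measure G) [SFinite μ] {f : G → ℝ≥0∞} (hf : Measurable f) :
    ν.withDensity f ∗ μ = ν.withDensity (fun y => ∫⁻ x, f (y - x) ∂μ) := by
  ext s hs
  have h1 : Measurable (s.indicator (1 : G → ℝ≥0∞)) := measurable_one.indicator hs
  calc (ν.withDensity f ∗ μ) s
      = ∫⁻ x, ∫⁻ y, f x * s.indicator 1 (x + y) ∂μ ∂ν := by
        rw [← lintegral_indicator_one hs, Measure.lintegral_conv h1,
          lintegral_withDensity_eq_lintegral_mul _ hf (by fun_prop)]
        congr with x
        exact (lintegral_const_mul _ (h1.comp (measurable_const_add x))).symm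
    _ = ∫⁻ y, ∫⁻ x, f x * s.indicator 1 (x + y) ∂ν ∂μ :=
        lintegral_lintegral_swap (by fun_prop)
    _ = ∫⁻ y, ∫⁻ x, f (x - y) * s.indicator 1 x ∂ν ∂μ := by
        congr with y
        rw [← lintegral_sub_right_eq_self _ y]
        simp
    _ = ∫⁻ x, ∫⁻ y, s.indicator 1 x * f (x - y) ∂μ ∂ν := by
        rw [lintegral_lintegral_swap (by fun_prop)]
        simp_rw [mul_comm]
    _ = (ν.withDensity fun y => ∫⁻ x, f (y - x) ∂μ) s := by
        rw [withDensity_apply _ hs, ← lintegral_indicator hs]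
        congr with x
        rw [lintegral_const_mul _ (by fun_prop)]
        by_cases hx : x ∈ s <;> simp [hx]

theorem lintegral_ofReal_circleMap_eq_circleAverage {f : ℂ → ℝ} (hf : Continuous f)
    (hf₀ : 0 ≤ f) (c : ℂ) (R : ℝ) :
    ∫⁻ θ, ENNReal.ofReal (f (circleMap c R θ))
        ∂((ENNReal.ofReal (2 * π))⁻¹ • volume.restrict (Set.Ico 0 (2 * π)))
      = ENNReal.ofReal (circleAverage f c R) := by
  have hint : IntegrableOn (fun θ => f (circleMap c R θ)) (Set.Ioc 0 (2 * π)) :=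
    (hf.comp (continuous_circleMap c R)).integrableOn_Ioc
  rw [lintegral_smul_measure, Measure.restrict_congr_set Ico_ae_eq_Ioc,
    ← ofReal_integral_eq_lintegral_ofReal hint (ae_of_all _ fun θ => hf₀ _),
    ← intervalIntegral.integral_of_le two_pi_pos.le, circleAverage_def, smul_eq_mul, smul_eq_mul,
    ENNReal.ofReal_mul (inv_nonneg.2 two_pi_pos.le), ENNReal.ofReal_inv_of_pos two_pi_pos]

theorem circleAverage_circularGaussianPDFReal_sub (N r : ℝ) (y : ℂ) :
    circleAverage (fun x => circularGaussianPDFReal N (y - x)) 0 r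
      = 1 / (π * N) * exp (-(‖y‖ ^ 2 + r ^ 2) / N) * besselI0 (2 * ‖y‖ * r / N) := by
  have hexpand : ∀ θ, circularGaussianPDFReal N (y - circleMap 0 r (θ + Complex.arg y))
      = (π * N)⁻¹ * exp (-(‖y‖ ^ 2 + r ^ 2) / N) * exp (2 * ‖y‖ * r / N * cos θ) := fun θ => by
    rw [circularGaussianPDFReal, norm_sub_circleMap_add_arg_sq, mul_assoc _ (rexp _), ← exp_add]
    ring_nf
  rw [circleAverage_eq_integral_add (Complex.arg y)]
  simp only [hexpand, intervalIntegral.integral_const_mul, integral_exp_mul_cos_eq_besselI0,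
    smul_eq_mul]
  field_simp

/-- The output `Y = √P e^{iΦ} + Z` of a complex AWGN channel, with `Φ` uniform on
`[0,2π)` and `Z = Z₁ + iZ₂` circularly-symmetric Gaussian of variance `N`, all independent,
has density `p(y) = (1/(πN)) e^{−(|y|²+P)/N} I₀(2|y|√P/N)` w.r.t. Lebesgue measure on `ℂ`. -/
theorem ring_output_density (P N : ℝ) (hP : 0 < P) (hN : 0 < N)
    {Ω : Type*} [MeasureSpace Ω] [IsProbabilityMeasure (ℙ : Measure Ω)]
    (Φ Z₁ Z₂ : Ω → ℝ)
    (hΦ : Measure.map Φ ℙ =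
      (ENNReal.ofReal (2 * Real.pi))⁻¹ • volume.restrict (Set.Ico 0 (2 * Real.pi)))
    (hZ₁ : Measure.map Z₁ ℙ = gaussianReal 0 (Real.toNNReal (N / 2)))
    (hZ₂ : Measure.map Z₂ ℙ = gaussianReal 0 (Real.toNNReal (N / 2)))
    (hindep : iIndepFun ![Φ, Z₁, Z₂] ℙ)
    (Y : Ω → ℂ)
    (hY : ∀ ω : Ω, Y ω = (Real.sqrt P * Real.cos (Φ ω) + Z₁ ω : ℝ) +
      (Real.sqrt P * Real.sin (Φ ω) + Z₂ ω : ℝ) * Complex.I) :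
    Measure.map Y ℙ = volume.withDensity (fun y : ℂ =>
      ENNReal.ofReal ((1 / (Real.pi * N)) * Real.exp (-(‖y‖ ^ 2 + P) / N) *
        besselI0 (2 * ‖y‖ * Real.sqrt P / N))) := by
  have hΦm : AEMeasurable Φ ℙ := .of_map_ne_zero (by simp [hΦ, pi_pos, ENNReal.mul_eq_top])
  have hZ₁m : AEMeasurable Z₁ ℙ := .of_map_ne_zero (hZ₁ ▸ IsProbabilityMeasure.ne_zero _)
  have hZ₂m : AEMeasurable Z₂ ℙ := .of_map_ne_zero (hZ₂ ▸ IsProbabilityMeasure.ne_zero _)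
  set Z : Ω → ℂ := fun ω => Z₁ ω + Z₂ ω * Complex.I
  set X : Ω → ℂ := fun ω => circleMap 0 (√P) (Φ ω)
  have hYZX : Y = Z + X :=
    funext fun ω => (hY ω).trans (ofReal_add_ofReal_mul_I_eq_add_circleMap _ _ _ _)
  have hZX : IndepFun Z X ℙ :=
    (hindep.indepFun_prodMk₀ (fun i => by fin_cases i <;> assumption) 1 2 0 (by decide)
      (by decide)).comp (φ := fun p : ℝ × ℝ => (p.1 : ℂ) + p.2 * Complex.I) (by fun_prop)
      (continuous_circleMap 0 √P).measurable
  have hZlaw : Measure.map Z ℙ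
      = volume.withDensity (fun z => ENNReal.ofReal (circularGaussianPDFReal N z)) :=
    (hindep.indepFun (show (1 : Fin 3) ≠ 2 by decide) :
      IndepFun Z₁ Z₂ ℙ).map_add_mul_I_eq_withDensity hN hZ₁m hZ₂m hZ₁ hZ₂
  have hXlaw : Measure.map X ℙ = (Measure.map Φ ℙ).map (circleMap 0 √P) :=
    ((continuous_circleMap 0 √P).aemeasurable.map_map_of_aemeasurable hΦm).symm
  rw [hYZX, hZX.map_add_eq_map_conv_map₀ (by fun_prop) (by fun_prop), hZlaw,
    Measure.withDensity_conv _ (by fun_prop)]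
  congr with y
  rw [hXlaw, lintegral_map (by fun_prop) (continuous_circleMap 0 √P).measurable, hΦ,
    lintegral_ofReal_circleMap_eq_circleAverage (by fun_prop)
      (fun x => circularGaussianPDFReal_nonneg hN.le (y - x)),
    circleAverage_circularGaussianPDFReal_sub, sq_sqrt hP.le]
end

section
/- Fix a real p₀ > 0 and define J : ℝ → ℝ for large s by J(s) = (−3 + √(1 + 48 s/(p₀ · ln s)))/4. Then liminf_{s → ∞} [ (1/(2·⌊J(s)⌋)) · ∑_{j=1}^{⌊J(s)⌋} ln((ln s) · j² · p₀) ] / ln s ≥ 1/2. -/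
open Filter Topology Real Finset
open scoped Nat

/-! With `r = √(s / (p₀ ln s))` the number of rings `n = ⌊J s⌋₊` lies between `r` and `2r`,
and `ln ((ln s) p₀) = ln s - 2 ln r`. Since `∑ ln (j²) = 2 ln n!` and
`n ln n - n ≤ ln n! ≤ n ln n`, the normalized phase contribution is `1/2 + O(1) / ln s`;
it even tends to `1/2`. -/

lemma mul_log_sub_le_log_factorial (n : ℕ) : n * log n - n ≤ log n ! := by
  rcases Nat.eq_zero_or_pos n with rfl | hn
  · simp
  have hfac : (0 : ℝ) < n ! := by positivity
  have h := pow_div_factorial_le_exp n (Nat.cast_nonneg n) n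
  rw [div_le_iff₀ hfac, ← log_le_log_iff (by positivity) (by positivity),
    log_mul (by positivity) hfac.ne', log_exp, log_pow] at h
  linarith

lemma log_factorial_le_mul_log (n : ℕ) : log n ! ≤ n * log n := by
  rw [← log_pow]
  exact log_le_log (by positivity) (by exact_mod_cast Nat.factorial_le_pow n)

lemma sum_log_mul_sq_mul {a b : ℝ} (ha : a ≠ 0) (hb : b ≠ 0) (n : ℕ) :
    ∑ j ∈ Icc 1 n, log (a * (j : ℝ) ^ 2 * b) = n * log (a * b) + 2 * log n ! := by
  have hterm : ∀ j ∈ Icc 1 n, log (a * (j : ℝ) ^ 2 * b) = log (a * b) + 2 * log j := by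
    intro j hj
    have hj : (j : ℝ) ≠ 0 := by have := (mem_Icc.mp hj).1; positivity
    rw [log_mul (by positivity) hb, log_mul ha (by positivity), log_pow, log_mul ha hb]
    push_cast; ring
  rw [sum_congr rfl hterm, sum_add_distrib, sum_const, Nat.card_Icc, Nat.add_sub_cancel,
    nsmul_eq_mul, ← mul_sum, ← prod_Ico_id_eq_factorial, Ico_add_one_right_eq_Icc,
    Nat.cast_prod, log_prod]
  intro j hj
  have := (mem_Icc.mp hj).1
  positivity

lemma floor_neg_three_add_sqrt_div_four_mem_Icc {x : ℝ} (hx : 3 ≤ x) :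
    (⌊(-3 + √(1 + 48 * x ^ 2)) / 4⌋₊ : ℝ) ∈ Set.Icc x (2 * x) := by
  have hlow : 4 * x + 7 ≤ √(1 + 48 * x ^ 2) := by
    rw [le_sqrt (by linarith) (by positivity)]
    nlinarith [mul_nonneg (sub_nonneg.2 hx) (by linarith : (0 : ℝ) ≤ 4 * x + 5)]
  have hup : √(1 + 48 * x ^ 2) ≤ 8 * x + 3 := by
    rw [sqrt_le_left (by linarith)]; nlinarith
  constructor
  · have := Nat.sub_one_lt_floor ((-3 + √(1 + 48 * x ^ 2)) / 4); linarith
  · have := Nat.floor_le (show 0 ≤ (-3 + √(1 + 48 * x ^ 2)) / 4 by linarith); linarith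

lemma log_factorial_div_sub_log_mem_Icc {n : ℕ} {r : ℝ} (hr : 0 < r)
    (hn : (n : ℝ) ∈ Set.Icc r (2 * r)) :
    log n ! / n - log r ∈ Set.Icc (-1) (log 2) := by
  have hn0 : (0 : ℝ) < n := hr.trans_le hn.1
  have hlow : log r ≤ log n := log_le_log hr hn.1
  have hup : log n ≤ log 2 + log r := by
    rw [← log_mul two_ne_zero hr.ne']; exact log_le_log hn0 hn.2
  have h1 := mul_log_sub_le_log_factorial n
  have h2 := log_factorial_le_mul_log n
  constructor
  · rw [le_sub_iff_add_le, le_div_iff₀ hn0]; nlinarith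
  · rw [sub_le_iff_le_add, div_le_iff₀ hn0]; nlinarith

lemma tendsto_sqrt_div_mul_log_atTop {p : ℝ} (hp : 0 < p) :
    Tendsto (fun s => √(s / (p * log s))) atTop atTop := by
  have hlog : Tendsto (fun s => log s / s) atTop (𝓝[>] 0) := by
    refine tendsto_nhdsWithin_of_tendsto_nhds_of_eventually_within _ ?_ ?_
    · simpa using tendsto_pow_log_div_mul_add_atTop 1 0 1 one_ne_zero
    · filter_upwards [eventually_gt_atTop 1] with s hs
      exact div_pos (log_pos hs) (by linarith)
  refine tendsto_sqrt_atTop.comp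
    ((hlog.inv_tendsto_nhdsGT_zero.atTop_div_const hp).congr fun s => ?_)
  rw [Pi.inv_apply, inv_div, div_div, mul_comm]

lemma log_log_mul_eq_sub_two_mul_log_sqrt {s p : ℝ} (hs : 1 < s) (hp : 0 < p) :
    log (log s * p) = log s - 2 * log √(s / (p * log s)) := by
  have hL := log_pos hs
  rw [log_sqrt (by positivity), log_div (by positivity) (by positivity), mul_comm p]
  ring

lemma phase_contribution_div_log_eq {L p r : ℝ} {n : ℕ} (hL : L ≠ 0) (hp : p ≠ 0) (hn : n ≠ 0)
    (hr : log (L * p) = L - 2 * log r) :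
    (1 / (2 * (n : ℝ)) * ∑ j ∈ Icc 1 n, log (L * (j : ℝ) ^ 2 * p)) / L
      = 1 / 2 + (log n ! / n - log r) / L := by
  rw [sum_log_mul_sq_mul hL hp, hr]
  field_simp
  ring

lemma tendsto_const_add_div_atTop {ι : Type*} {l : Filter ι} {f g : ι → ℝ} {a b : ℝ}
    (c : ℝ) (hf : ∀ᶠ i in l, f i ∈ Set.Icc a b) (hg : Tendsto g l atTop) :
    Tendsto (fun i => c + f i / g i) l (𝓝 c) := by
  have hbdd : IsBoundedUnder (· ≤ ·) l (fun i => ‖f i‖) := by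
    refine isBoundedUnder_of_eventually_le (a := max |a| |b|) ?_
    filter_upwards [hf] with i hi
    exact abs_le_max_abs_abs hi.1 hi.2
  simpa [div_eq_inv_mul] using (hg.inv_tendsto_atTop.zero_mul_isBoundedUnder_le hbdd).const_add c

/-- The phase contribution `(1/(2J)) ∑_{j=1}^J ln(P_j/N)` with ring powers
`P_j/N = (ln s)·j²·p₀`, normalized by `ln s`, has limit inferior at least `1/2`. -/
theorem phase_contribution_prelog_ge_half (p₀ : ℝ) (hp₀ : 0 < p₀)
    (J : ℝ → ℝ)
    (hJ : ∀ᶠ s in atTop, J s = (-3 + Real.sqrt (1 + 48 * s / (p₀ * Real.log s))) / 4) :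
    (1 : ℝ) / 2 ≤ liminf (fun s =>
      ((1 / (2 * (⌊J s⌋₊ : ℝ))) *
        ∑ j ∈ Finset.Icc 1 ⌊J s⌋₊, Real.log (Real.log s * (j : ℝ) ^ 2 * p₀)) /
      Real.log s) atTop := by
  set r : ℝ → ℝ := fun s => √(s / (p₀ * log s))
  have hr := tendsto_sqrt_div_mul_log_atTop hp₀
  have hfloor : ∀ᶠ s in atTop, (⌊J s⌋₊ : ℝ) ∈ Set.Icc (r s) (2 * r s) := by
    filter_upwards [hJ, hr.eventually_ge_atTop 3, eventually_gt_atTop 1] with s hJs hrs hs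
    have hsq : 48 * s / (p₀ * log s) = 48 * r s ^ 2 := by
      rw [sq_sqrt (div_nonneg (by linarith) (mul_nonneg hp₀.le (log_nonneg hs.le))),
        mul_div_assoc]
    rw [hJs, hsq]
    exact floor_neg_three_add_sqrt_div_four_mem_Icc hrs
  have hbdd :
      ∀ᶠ s in atTop, log ⌊J s⌋₊ ! / ⌊J s⌋₊ - log (r s) ∈ Set.Icc (-1) (log 2) := by
    filter_upwards [hfloor, hr.eventually_gt_atTop 0] with s hn hrs
    exact log_factorial_div_sub_log_mem_Icc hrs hn
  refine ((tendsto_const_add_div_atTop (1 / 2) hbdd tendsto_log_atTop).congr' ?_).liminf_eq.ge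
  filter_upwards [hfloor, hr.eventually_gt_atTop 0, eventually_gt_atTop 1] with s hn hrs hs
  have hn0 : ⌊J s⌋₊ ≠ 0 := by exact_mod_cast (hrs.trans_le hn.1).ne'
  exact (phase_contribution_div_log_eq (log_pos hs).ne' hp₀.ne' hn0
    (log_log_mul_eq_sub_two_mul_log_sqrt hs hp₀)).symm
end
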